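/- arXiv:2204.09173 — 3 statements merged into one kernel-verified Lean document; each statement's English description precedes it below -/
import Mathlib

section
/- Define L_{ρ,m} = ρ^{m+1}(m+1)^7/(m!)² for ρ > 0 and integer m ≥ 0. There exists a constant C > 0 (independent of ρ, m, k) such that for all integers m ≥ 0 and 0 ≤ k ≤ ⌊m/2⌋: (m!/(k!(m-k)!)) · L_{ρ,m}/(L_{ρ,k+2} · L_{ρ,m-k+1}) ≤ (C/ρ²) · (1/(k+1)) · ((m+1)^{1/2}/ρ^{1/2}) · ((m-k+2)^{3/2}/ρ^{3/2}). -/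
/-! Writing `m = k + n` with `k ≤ n`, the powers of `ρ` cancel to `ρ⁻⁴` and the left-hand side is an
explicit rational function of `k, n` times `k! n! / m! ≤ 1`; crude bounds on its polynomial factors
leave `(m + 1)⁷ / (ρ⁴ (k + 1) (n + 2)⁵)`. As `k ≤ n` gives `m + 1 ≤ 2 (n + 2)`, the surplus
`(m + 1)^{13/2}` is at most `2^{13/2} (n + 2)^{13/2}`, whence `C = 128`. -/

/-- The Gevrey-2 weight `L_{ρ,m} = ρ^{m+1}(m+1)^7/(m!)²`. -/
noncomputable def Lw (ρ : ℝ) (m : ℕ) : ℝ :=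
  ρ ^ (m + 1) * ((m : ℝ) + 1) ^ 7 / ((Nat.factorial m : ℝ)) ^ 2

open Nat Real

lemma choose_mul_Lw_ratio_eq {ρ : ℝ} (hρ : ρ ≠ 0) (k n : ℕ) :
    ((k + n)! : ℝ) / (k ! * n !) * (Lw ρ (k + n) / (Lw ρ (k + 2) * Lw ρ (n + 1))) =
      (k + n + 1 : ℝ) ^ 7 * ((k + 1) * (k + 2) * (n + 1) : ℝ) ^ 2 * (k ! * n ! : ℝ) /
        (ρ ^ 4 * ((k + 3 : ℝ) ^ 7 * (n + 2 : ℝ) ^ 7) * (k + n)!) := by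
  simp only [Lw, Nat.factorial_succ]
  push_cast
  field_simp
  ring

lemma Lw_ratio_poly_le (k n : ℝ) (hk : 0 ≤ k) (hn : 0 ≤ n) :
    ((k + 1) * (k + 2) * (n + 1)) ^ 2 * ((k + 1) * (n + 2) ^ 5) ≤ (k + 3) ^ 7 * (n + 2) ^ 7 :=
  calc ((k + 1) * (k + 2) * (n + 1)) ^ 2 * ((k + 1) * (n + 2) ^ 5)
      ≤ ((k + 3) * (k + 3) * (n + 2)) ^ 2 * ((k + 3) ^ 3 * (n + 2) ^ 5) := by
        gcongr <;> try linarith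
        calc k + 1 ≤ k + 3 := by linarith
          _ ≤ (k + 3) ^ 3 := le_self_pow₀ (by linarith) (by norm_num)
    _ = (k + 3) ^ 7 * (n + 2) ^ 7 := by ring

lemma pow_seven_le_of_le_two_mul {a b : ℝ} (ha : 0 ≤ a) (hab : a ≤ 2 * b) :
    a ^ 7 ≤ 128 * (a ^ (1 / 2 : ℝ) * b ^ (3 / 2 : ℝ)) * b ^ 5 := by
  have hb : 0 ≤ b := by linarith
  calc a ^ 7 = a ^ (1 / 2 : ℝ) * a ^ (13 / 2 : ℝ) := by
        rw [← rpow_add' ha (by norm_num), ← rpow_natCast]; norm_num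
    _ ≤ a ^ (1 / 2 : ℝ) * (2 * b) ^ (13 / 2 : ℝ) := by gcongr
    _ = 2 ^ (13 / 2 : ℝ) * (a ^ (1 / 2 : ℝ) * b ^ (3 / 2 : ℝ)) * b ^ 5 := by
        have : b ^ (13 / 2 : ℝ) = b ^ (3 / 2 : ℝ) * b ^ 5 := by
          rw [← rpow_natCast b 5, ← rpow_add' hb (by norm_num)]; norm_num
        rw [mul_rpow zero_le_two hb, this]; ring
    _ ≤ 128 * (a ^ (1 / 2 : ℝ) * b ^ (3 / 2 : ℝ)) * b ^ 5 := by
        gcongr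
        calc (2 : ℝ) ^ (13 / 2 : ℝ) ≤ 2 ^ (7 : ℝ) :=
              rpow_le_rpow_of_exponent_le one_le_two (by norm_num)
          _ = 128 := by norm_num

lemma choose_mul_Lw_ratio_le {ρ : ℝ} (hρ : 0 < ρ) (k n : ℕ) :
    ((k + n)! : ℝ) / (k ! * n !) * (Lw ρ (k + n) / (Lw ρ (k + 2) * Lw ρ (n + 1))) ≤
      (k + n + 1 : ℝ) ^ 7 / (ρ ^ 4 * ((k + 1) * (n + 2 : ℝ) ^ 5)) := by
  have hfac : (k ! * n ! : ℝ) ≤ (k + n)! := by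
    exact_mod_cast
      Nat.le_of_dvd (k + n).factorial_pos (k.factorial_mul_factorial_dvd_factorial_add n)
  have hpoly := Lw_ratio_poly_le k n k.cast_nonneg n.cast_nonneg
  rw [choose_mul_Lw_ratio_eq hρ.ne', div_le_div_iff₀ (by positivity) (by positivity)]
  calc _ = (k + n + 1 : ℝ) ^ 7 * ρ ^ 4 *
        (((k + 1) * (k + 2) * (n + 1) : ℝ) ^ 2 * ((k + 1) * (n + 2 : ℝ) ^ 5) * (k ! * n ! : ℝ)) := by
        ring
    _ ≤ (k + n + 1 : ℝ) ^ 7 * ρ ^ 4 * ((k + 3 : ℝ) ^ 7 * (n + 2 : ℝ) ^ 7 * (k + n)!) := by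
        gcongr
    _ = _ := by ring

/-- Low-frequency combinatorial weight inequality for the Gevrey-2 weights: there is an
absolute constant `C > 0` such that for `0 < ρ ≤ 1`, `m ≥ 0` and `0 ≤ k ≤ ⌊m/2⌋`,
`(m!/(k!(m-k)!)) L_{ρ,m}/(L_{ρ,k+2} L_{ρ,m-k+1})
  ≤ (C/ρ²)(1/(k+1))((m+1)^{1/2}/ρ^{1/2})((m-k+2)^{3/2}/ρ^{3/2})`. -/
theorem weight_ineq_low : ∃ C : ℝ, 0 < C ∧
    ∀ ρ : ℝ, 0 < ρ → ρ ≤ 1 → ∀ m k : ℕ, k ≤ m / 2 →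
      (Nat.factorial m : ℝ) / ((Nat.factorial k : ℝ) * (Nat.factorial (m - k) : ℝ)) *
          (Lw ρ m / (Lw ρ (k + 2) * Lw ρ (m - k + 1))) ≤
        C / ρ ^ 2 * (1 / ((k : ℝ) + 1)) * (((m : ℝ) + 1) ^ ((1 : ℝ) / 2) / ρ ^ ((1 : ℝ) / 2)) *
          (((m - k : ℕ) + 2 : ℝ) ^ ((3 : ℝ) / 2) / ρ ^ ((3 : ℝ) / 2)) := by
  refine ⟨128, by norm_num, fun ρ hρ _ m k hk => ?_⟩
  obtain ⟨n, rfl⟩ : ∃ n, m = k + n := ⟨m - k, by omega⟩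
  have hm : (k + n + 1 : ℝ) ≤ 2 * (n + 2) := by
    have : (k : ℝ) ≤ n := by exact_mod_cast (by omega : k ≤ n)
    linarith
  have hρ2 : ρ ^ (1 / 2 : ℝ) * ρ ^ (3 / 2 : ℝ) = ρ ^ 2 := by
    rw [← rpow_add hρ, ← rpow_natCast]; norm_num
  rw [Nat.add_sub_cancel_left]
  push_cast
  calc _ ≤ (k + n + 1 : ℝ) ^ 7 / (ρ ^ 4 * ((k + 1) * (n + 2 : ℝ) ^ 5)) :=
        choose_mul_Lw_ratio_le hρ k n
    _ ≤ 128 * ((k + n + 1 : ℝ) ^ (1 / 2 : ℝ) * (n + 2 : ℝ) ^ (3 / 2 : ℝ)) * (n + 2 : ℝ) ^ 5 /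
          (ρ ^ 4 * ((k + 1) * (n + 2 : ℝ) ^ 5)) := by
        gcongr
        exact pow_seven_le_of_le_two_mul (by positivity) hm
    _ = _ := by
        field_simp
        rw [← hρ2]
end

section
/- Define L_{ρ,m} = ρ^{m+1}(m+1)^7/(m!)². For all integers m ≥ 0, all 0 ≤ k ≤ m, and all 0 < ρ ≤ 1: (m!/(k!(m-k)!)) · L_{ρ/2,m}/(L_{ρ,k+3} · L_{ρ/2,m-k}) ≤ 2^{7-k}(k+3)⁶ ρ^{-4}. -/
open Nat

theorem choose_mul_Lw_div_eq {ρ : ℝ} (hρ : ρ ≠ 0) {m k : ℕ} (hk : k ≤ m) :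
    (m ! : ℝ) / (k ! * (m - k)!) * (Lw (ρ / 2) m / (Lw ρ (k + 3) * Lw (ρ / 2) (m - k))) =
      ((k + 1).ascFactorial 3 : ℝ) ^ 2 / m.choose k *
        (((m : ℝ) + 1) / (((k : ℝ) + 4) * ((m - k : ℕ) + 1))) ^ 7 / (ρ ^ 4 * 2 ^ k) := by
  obtain ⟨j, rfl⟩ := Nat.exists_eq_add_of_le hk
  have hchoose := Nat.choose_mul_factorial_mul_factorial hk
  have hasc := Nat.factorial_mul_ascFactorial k 3
  rw [Nat.add_sub_cancel_left] at hchoose ⊢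
  have hchoose_ne : ((k + j).choose k : ℝ) ≠ 0 := mod_cast (Nat.choose_pos hk).ne'
  simp only [Lw]
  rw [← hchoose, ← hasc]
  push_cast
  simp only [div_pow]
  field_simp
  ring

theorem choose_mul_Lw_div_le {ρ : ℝ} (hρ : ρ ≠ 0) {m k : ℕ} (hk : k ≤ m) :
    (m ! : ℝ) / (k ! * (m - k)!) * (Lw (ρ / 2) m / (Lw ρ (k + 3) * Lw (ρ / 2) (m - k))) ≤
      ((k : ℝ) + 3) ^ 6 / (ρ ^ 4 * 2 ^ k) := by
  have hasc : ((k + 1).ascFactorial 3 : ℝ) ≤ ((k : ℝ) + 3) ^ 3 :=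
    mod_cast Nat.ascFactorial_le_pow_add k 3
  have hchoose : (1 : ℝ) ≤ m.choose k := mod_cast Nat.choose_pos hk
  have hsucc : (m : ℝ) + 1 ≤ ((k : ℝ) + 4) * ((m - k : ℕ) + 1) := by
    obtain ⟨j, rfl⟩ := Nat.exists_eq_add_of_le hk
    push_cast [Nat.add_sub_cancel_left]
    nlinarith [(k.cast_nonneg : (0 : ℝ) ≤ k), (j.cast_nonneg : (0 : ℝ) ≤ j)]
  rw [choose_mul_Lw_div_eq hρ hk]
  calc _ ≤ (((k : ℝ) + 3) ^ 3) ^ 2 / 1 * 1 ^ 7 / (ρ ^ 4 * 2 ^ k) := by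
        gcongr
        exact div_le_one_of_le₀ hsucc (by positivity)
    _ = ((k : ℝ) + 3) ^ 6 / (ρ ^ 4 * 2 ^ k) := by ring

theorem weight_compare_general (ρ : ℝ) (hρ : 0 < ρ) (m k : ℕ) (hk : k ≤ m) :
    (Nat.factorial m : ℝ) / ((Nat.factorial k : ℝ) * (Nat.factorial (m - k) : ℝ)) *
        (Lw (ρ / 2) m / (Lw ρ (k + 3) * Lw (ρ / 2) (m - k))) ≤
      (2 : ℝ) ^ ((7 : ℝ) - (k : ℝ)) * ((k : ℝ) + 3) ^ 6 * ρ ^ (-4 : ℤ) := by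
  calc _ ≤ ((k : ℝ) + 3) ^ 6 / (ρ ^ 4 * 2 ^ k) := choose_mul_Lw_div_le hρ.ne' hk
    _ ≤ 2 ^ 7 * (((k : ℝ) + 3) ^ 6 / (ρ ^ 4 * 2 ^ k)) :=
        le_mul_of_one_le_left (by positivity) (by norm_num)
    _ = _ := by
        rw [Real.rpow_sub two_pos, Real.rpow_natCast, zpow_neg, zpow_ofNat]
        norm_num
        ring

/-- Weight comparison between radii `ρ/2` and `ρ`: for all `m ≥ 0`, `0 ≤ k ≤ m` and
`0 < ρ ≤ 1`, `(m!/(k!(m-k)!)) L_{ρ/2,m}/(L_{ρ,k+3} L_{ρ/2,m-k}) ≤ 2^{7-k}(k+3)⁶ ρ⁻⁴`. -/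
theorem weight_compare (ρ : ℝ) (hρ : 0 < ρ) (hρ1 : ρ ≤ 1) (m k : ℕ) (hk : k ≤ m) :
    (Nat.factorial m : ℝ) / ((Nat.factorial k : ℝ) * (Nat.factorial (m - k) : ℝ)) *
        (Lw (ρ / 2) m / (Lw ρ (k + 3) * Lw (ρ / 2) (m - k))) ≤
      (2 : ℝ) ^ ((7 : ℝ) - (k : ℝ)) * ((k : ℝ) + 3) ^ 6 * ρ ^ (-4 : ℤ) :=
  weight_compare_general ρ hρ m k hk
end

section
/- Define L_{ρ,m} = ρ^{m+1}(m+1)^7/(m!)². For all integers m ≥ 0, all k with ⌊m/2⌋+1 ≤ k ≤ m, and all 0 < ρ ≤ 1: (m!/(k!(m-k)!)) · L_{ρ/2,m}/(L_{ρ,k+2} · L_{ρ/2,m-k+1}) ≤ 2^{7-k}(k+2)⁶ ρ^{-4}. -/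
lemma Lw_half_div_Lw_mul_Lw_half (ρ : ℝ) (hρ : ρ ≠ 0) (k n : ℕ) :
    Lw (ρ / 2) (k + n) / (Lw ρ (k + 2) * Lw (ρ / 2) (n + 1)) =
      2 / 2 ^ k / ρ ^ 4 * (Lw 1 (k + n) / (Lw 1 (k + 2) * Lw 1 (n + 1))) := by
  simp only [Lw, one_pow, one_mul, div_pow]
  field_simp
  ring

lemma cast_choose_mul_Lw_one_ratio (k n : ℕ) :
    ((k + n).choose k : ℝ) * (Lw 1 (k + n) / (Lw 1 (k + 2) * Lw 1 (n + 1))) =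
      (((k : ℝ) + 2) * (k + 1) * (n + 1)) ^ 2 * ((k : ℝ) + n + 1) ^ 7 /
        (((k : ℝ) + 3) ^ 7 * ((n : ℝ) + 2) ^ 7) / ((k + n).choose k : ℝ) := by
  rw [Nat.cast_add_choose]
  simp only [Lw, one_pow, one_mul, Nat.factorial_succ]
  push_cast
  field_simp
  ring

lemma weight_polynomial_le (K N : ℝ) (hK : 0 ≤ K) (hN : 0 ≤ N) (hNK : N ≤ K + 5) :
    ((K + 2) * (K + 1) * (N + 1)) ^ 2 * (K + N + 1) ^ 7 ≤
      64 * (K + 2) ^ 6 * ((K + 3) ^ 7 * (N + 2) ^ 7) := by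
  have hsum : K + N + 1 ≤ 2 * (K + 3) := by linarith
  have hK1 : (K + 1) ^ 2 ≤ (K + 2) ^ 4 := by nlinarith
  have hN1 : 2 * (N + 1) ^ 2 ≤ (N + 2) ^ 7 :=
    calc 2 * (N + 1) ^ 2 ≤ 2 ^ 5 * (N + 2) ^ 2 := by gcongr <;> linarith
      _ ≤ (N + 2) ^ 5 * (N + 2) ^ 2 := by gcongr; linarith
      _ = (N + 2) ^ 7 := by ring
  calc ((K + 2) * (K + 1) * (N + 1)) ^ 2 * (K + N + 1) ^ 7
      ≤ ((K + 2) * (K + 1) * (N + 1)) ^ 2 * (2 * (K + 3)) ^ 7 := by gcongr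
    _ = 64 * (K + 2) ^ 2 * (K + 1) ^ 2 * (2 * (N + 1) ^ 2) * (K + 3) ^ 7 := by ring
    _ ≤ 64 * (K + 2) ^ 2 * (K + 2) ^ 4 * (N + 2) ^ 7 * (K + 3) ^ 7 := by gcongr
    _ = 64 * (K + 2) ^ 6 * ((K + 3) ^ 7 * (N + 2) ^ 7) := by ring

lemma cast_choose_mul_Lw_one_ratio_le (k n : ℕ) (hnk : n ≤ k + 5) :
    ((k + n).choose k : ℝ) * (Lw 1 (k + n) / (Lw 1 (k + 2) * Lw 1 (n + 1))) ≤
      64 * ((k : ℝ) + 2) ^ 6 := by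
  have hchoose : (1 : ℝ) ≤ (k + n).choose k := by
    exact_mod_cast Nat.choose_pos (Nat.le_add_right k n)
  rw [cast_choose_mul_Lw_one_ratio]
  calc _ ≤ (((k : ℝ) + 2) * (k + 1) * (n + 1)) ^ 2 * ((k : ℝ) + n + 1) ^ 7 /
        (((k : ℝ) + 3) ^ 7 * ((n : ℝ) + 2) ^ 7) := div_le_self (by positivity) hchoose
    _ ≤ 64 * ((k : ℝ) + 2) ^ 6 := by
      rw [div_le_iff₀ (by positivity)]
      exact weight_polynomial_le k n k.cast_nonneg n.cast_nonneg (by exact_mod_cast hnk)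

theorem weight_compare_high_general (ρ : ℝ) (hρ : 0 < ρ) (m k : ℕ)
    (hk1 : m / 2 + 1 ≤ k) (hk2 : k ≤ m) :
    (Nat.factorial m : ℝ) / ((Nat.factorial k : ℝ) * (Nat.factorial (m - k) : ℝ)) *
        (Lw (ρ / 2) m / (Lw ρ (k + 2) * Lw (ρ / 2) (m - k + 1))) ≤
      (2 : ℝ) ^ ((7 : ℝ) - (k : ℝ)) * ((k : ℝ) + 2) ^ 6 * ρ ^ (-4 : ℤ) := by
  obtain ⟨n, rfl⟩ : ∃ n, m = k + n := ⟨m - k, by omega⟩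
  have h2 : (2 : ℝ) ^ ((7 : ℝ) - k) = 2 * 64 / 2 ^ k := by
    rw [Real.rpow_sub two_pos, Real.rpow_natCast]
    norm_num
  rw [← Nat.cast_choose ℝ hk2, Nat.add_sub_cancel_left, Lw_half_div_Lw_mul_Lw_half ρ hρ.ne',
    mul_left_comm, h2, zpow_neg, zpow_ofNat]
  calc _ ≤ 2 / 2 ^ k / ρ ^ 4 * (64 * ((k : ℝ) + 2) ^ 6) :=
        mul_le_mul_of_nonneg_left (cast_choose_mul_Lw_one_ratio_le k n (by omega)) (by positivity)
    _ = _ := by ring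

/-- High-frequency weight comparison between radii `ρ/2` and `ρ`: for `m ≥ 0`,
`⌊m/2⌋+1 ≤ k ≤ m` and `0 < ρ ≤ 1`,
`(m!/(k!(m-k)!)) L_{ρ/2,m}/(L_{ρ,k+2} L_{ρ/2,m-k+1}) ≤ 2^{7-k}(k+2)⁶ ρ⁻⁴`. -/
theorem weight_compare_high (ρ : ℝ) (hρ : 0 < ρ) (hρ1 : ρ ≤ 1) (m k : ℕ)
    (hk1 : m / 2 + 1 ≤ k) (hk2 : k ≤ m) :
    (Nat.factorial m : ℝ) / ((Nat.factorial k : ℝ) * (Nat.factorial (m - k) : ℝ)) *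
        (Lw (ρ / 2) m / (Lw ρ (k + 2) * Lw (ρ / 2) (m - k + 1))) ≤
      (2 : ℝ) ^ ((7 : ℝ) - (k : ℝ)) * ((k : ℝ) + 2) ^ 6 * ρ ^ (-4 : ℤ) :=
  weight_compare_high_general ρ hρ m k hk1 hk2
end
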